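/- arXiv:2002.03707 — 5 statements merged into one kernel-verified Lean document; each statement's English description precedes it below -/
import Mathlib

section
/- Let G be a group acting transitively on a set X, A an abelian group (trivial G-module), H = A^X ⋊ G with the natural G-action on functions X → A, and δ : A → A^X the diagonal embedding. Fix x ∈ X with stabilizer G_x. For group homomorphisms χ, χ' : G → A, the subgroups G^χ = {δ(χ(g))·g : g ∈ G} and G^{χ'} of H are conjugate in H if and only if χ and χ' coincide on G_x. -/
private lemma mulAutArrow_apply' {G X A : Type*} [Group G] [MulAction G X] [CommGroup A]
    (g : G) (f : X → A) (y : X) : mulAutArrow g f y = f (g⁻¹ • y) := rfl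

/-- Let `G` act transitively on `X`, let `A` be an abelian group (trivial `G`-module), and
`H = A^X ⋊ G` (with `G` permuting coordinates). For homomorphisms `χ, χ' : G → A`, the
subgroups `G^χ = {δ(χ g) · g : g ∈ G}` and `G^{χ'}` of `H` are conjugate in `H` if and only
if `χ` and `χ'` coincide on the stabilizer `G_x` of a point `x ∈ X`. -/
theorem conj_graph_subgroups_iff_eq_on_stabilizer
    {G X A : Type*} [Group G] [MulAction G X] [MulAction.IsPretransitive G X]
    [CommGroup A] (x : X) (χ χ' : G →* A) :
    (∃ h : (X → A) ⋊[mulAutArrow] G,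
        (fun k => h * k * h⁻¹) ''
            (Set.range fun g : G => (⟨fun _ => χ g, g⟩ : (X → A) ⋊[mulAutArrow] G)) =
          Set.range fun g : G => (⟨fun _ => χ' g, g⟩ : (X → A) ⋊[mulAutArrow] G)) ↔
      ∀ g ∈ MulAction.stabilizer G x, χ g = χ' g := by
  constructor
  · rintro ⟨h, hset⟩ g' hg'
    have hmem : (⟨fun _ => χ' g', g'⟩ : (X → A) ⋊[mulAutArrow] G) ∈
        Set.range fun g : G => (⟨fun _ => χ' g, g⟩ : (X → A) ⋊[mulAutArrow] G) := ⟨g', rfl⟩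
    rw [← hset] at hmem
    obtain ⟨k, ⟨g, rfl⟩, hk⟩ := hmem
    obtain ⟨f, a⟩ := h
    have hr := congrArg SemidirectProduct.right hk
    simp only [SemidirectProduct.mul_right, SemidirectProduct.inv_right] at hr
    have hg : g = a⁻¹ * g' * a := by rw [← hr]; group
    have hl := congrFun (congrArg SemidirectProduct.left hk) x
    simp only [SemidirectProduct.mul_left, SemidirectProduct.mul_right,
      SemidirectProduct.inv_left, SemidirectProduct.inv_right,
      mulAutArrow_apply', Pi.mul_apply, Pi.inv_apply, inv_inv, mul_inv_rev,
      mul_smul, inv_smul_smul, smul_inv_smul] at hl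
    -- hl should now be : f x * χ g * (f (a • g⁻¹ • a⁻¹ • x))⁻¹ = χ' g'  (roughly)
    have hx : a • g⁻¹ • a⁻¹ • x = x := by
      have : (a * g⁻¹ * a⁻¹) • x = x := by
        have : a * g⁻¹ * a⁻¹ = g'⁻¹ := by rw [← hr]; group
        rw [this, ← MulAction.mem_stabilizer_iff]
        exact inv_mem hg'
      simpa [mul_smul] using this
    rw [hx] at hl
    have hχg : χ g = χ g' := by rw [hg]; simp [mul_comm]
    have hl' : f x * χ g * (f x)⁻¹ = χ' g' := by simpa using hl
    rw [← hχg, ← hl', mul_comm (f x) (χ g), mul_assoc, mul_inv_cancel, mul_one]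
  · intro hst
    choose c hc using fun y => MulAction.exists_smul_eq G x y
    set f : X → A := fun y => (χ (c y))⁻¹ * χ' (c y) with hf
    have hwd : ∀ (g : G) (y : X), g • x = y → f y = (χ g)⁻¹ * χ' g := by
      intro g y hy
      have hs : (c y)⁻¹ * g ∈ MulAction.stabilizer G x := by
        rw [MulAction.mem_stabilizer_iff, mul_smul, hy, inv_smul_eq_iff]
        exact (hc y).symm
      have e := hst _ hs
      simp only [map_mul, map_inv] at e
      show (χ (c y))⁻¹ * χ' (c y) = (χ g)⁻¹ * χ' g
      rw [inv_mul_eq_div, inv_mul_eq_div, div_eq_div_iff_mul_eq_mul]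
      rw [inv_mul_eq_div, inv_mul_eq_div, div_eq_div_iff_mul_eq_mul] at e
      rw [mul_comm]; exact e
    refine ⟨⟨f, 1⟩, ?_⟩
    rw [← Set.range_comp]
    refine congrArg Set.range (funext fun g => ?_)
    show (⟨f, 1⟩ : (X → A) ⋊[mulAutArrow] G) * ⟨fun _ => χ g, g⟩ *
        (⟨f, 1⟩ : (X → A) ⋊[mulAutArrow] G)⁻¹ = ⟨fun _ => χ' g, g⟩
    ext y
    · simp only [SemidirectProduct.mul_left, SemidirectProduct.mul_right,
        SemidirectProduct.inv_left, SemidirectProduct.inv_right,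
        mulAutArrow_apply', Pi.mul_apply, Pi.inv_apply, one_mul, mul_one,
        inv_one, one_smul, mul_inv_rev, mul_smul]
      have h1 : f y = (χ (g * c (g⁻¹ • y)))⁻¹ * χ' (g * c (g⁻¹ • y)) :=
        hwd _ _ (by rw [mul_smul, hc, smul_inv_smul])
      have h2 : f (g⁻¹ • y) = (χ (c (g⁻¹ • y)))⁻¹ * χ' (c (g⁻¹ • y)) := rfl
      rw [h1, h2]
      simp only [map_mul, mul_inv_rev, inv_inv]
      generalize χ (c (g⁻¹ • y)) = u
      generalize χ' (c (g⁻¹ • y)) = v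
      simp [mul_comm, mul_assoc, mul_left_comm]
    · simp [SemidirectProduct.mul_right, SemidirectProduct.inv_right]
end

section
/- Let G be a group acting transitively on a set X, A an abelian group, H = A^X ⋊ G, x ∈ X with stabilizer G_x. Suppose the restriction map H¹(G,A) → H¹(G_x,A) (i.e., Hom(G,A) → Hom(G_x,A)) is surjective. Then any subgroup C ⊂ H with π(C) = G and C ∩ A^X = 1 is conjugate in H to G^χ = {δ(χ(g))·g : g ∈ G} for some homomorphism χ : G → A. -/
/-!
A complement `C` of `A^X` in `A^X ⋊ G` is the graph `{(c g, g)}` of a 1-cocycle `c : G → A^X`.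
Evaluating `c` at `x` on `G_x` gives a homomorphism `ψ : G_x → A` (Shapiro's lemma), which
extends to `χ : G → A` by hypothesis. The cocycle `c / δχ` then vanishes at `x` on `G_x`; as `X`
is the orbit of `x`, such a cocycle is a coboundary `g ↦ g • m / m`, and conjugating by `m ∈ A^X`
carries `C` onto `G^χ`.
-/

namespace SemidirectProduct

variable {N G : Type*} [Group N] [Group G] {φ : G →* MulAut N}

theorem exists_coe_eq_range_mk_of_map_rightHom_eq_top {C : Subgroup (N ⋊[φ] G)}
    (hsurj : C.map rightHom = ⊤) (htriv : ∀ z ∈ C, z.right = 1 → z = 1) :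
    ∃ c : G → N, (C : Set (N ⋊[φ] G)) = Set.range fun g => ⟨c g, g⟩ := by
  have hsec (g : G) : ∃ z ∈ C, z.right = g := Subgroup.mem_map.mp (hsurj ▸ Subgroup.mem_top g)
  choose s hsC hsright using hsec
  refine ⟨fun g => (s g).left, Set.ext fun z => ⟨fun hz => ⟨z.right, ?_⟩, ?_⟩⟩
  · have hdiv : s z.right * z⁻¹ = 1 :=
      htriv _ (mul_mem (hsC _) (inv_mem hz)) (by simp [hsright])
    have hsz : s z.right = z := mul_inv_eq_one.mp hdiv
    ext <;> simp [hsz]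
  · rintro ⟨g, rfl⟩
    have hsg : (⟨(s g).left, g⟩ : N ⋊[φ] G) = s g := by ext <;> simp [hsright]
    simpa only [hsg, SetLike.mem_coe] using hsC g

theorem map_mul_of_coe_eq_range_mk {C : Subgroup (N ⋊[φ] G)} {c : G → N}
    (hC : (C : Set (N ⋊[φ] G)) = Set.range fun g => ⟨c g, g⟩) (g h : G) :
    c (g * h) = c g * φ g (c h) := by
  have hmk (g : G) : (⟨c g, g⟩ : N ⋊[φ] G) ∈ C := by
    rw [← SetLike.mem_coe, hC]
    exact ⟨g, rfl⟩
  have hmem := C.mul_mem (hmk g) (hmk h)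
  rw [← SetLike.mem_coe, hC] at hmem
  obtain ⟨k, hk⟩ := hmem
  have hright : k = g * h := congrArg right hk
  subst hright
  exact congrArg left hk

theorem inl_mul_mk_mul_inl_inv (n m : N) (g : G) :
    inl n * (⟨m, g⟩ : N ⋊[φ] G) * (inl n)⁻¹ = ⟨n * m * φ g n⁻¹, g⟩ := by
  ext <;> simp

theorem image_conj_range_mk {c d : G → N} (n : N) (h : ∀ g, n * c g * φ g n⁻¹ = d g) :
    (fun k => inl n * k * (inl n)⁻¹) '' (Set.range fun g => (⟨c g, g⟩ : N ⋊[φ] G)) =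
      Set.range fun g => ⟨d g, g⟩ := by
  rw [← Set.range_comp]
  simp only [Function.comp_def, inl_mul_mk_mul_inl_inv, h]

end SemidirectProduct

namespace groupCohomology

section Div

variable {G M : Type*} [Group G] [CommGroup M] [MulDistribMulAction G M]

theorem IsMulCocycle₁.div {f f' : G → M} (hf : IsMulCocycle₁ f) (hf' : IsMulCocycle₁ f') :
    IsMulCocycle₁ (f / f') := by
  intro g h
  simp only [Pi.div_apply, hf g h, hf' g h, smul_div']
  exact mul_div_mul_comm _ _ _ _

end Div

section Coinduced

open MulAction

attribute [local instance] arrowMulDistribMulAction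

variable {G X A : Type*} [Group G] [MulAction G X] [CommGroup A]

theorem isMulCocycle₁_const (χ : G →* A) : IsMulCocycle₁ fun g => (fun _ : X => χ g) := by
  intro g h
  ext y
  exact (map_mul χ g h).trans (mul_comm _ _)

/-- On cocycles, the Shapiro map `H¹(G, A^X) → H¹(G_x, A)`. -/
def IsMulCocycle₁.evalStabilizer {c : G → X → A} (hc : IsMulCocycle₁ c) (x : X) :
    stabilizer G x →* A where
  toFun s := c s x
  map_one' := by simp [map_one_of_isMulCocycle₁ hc]
  map_mul' s t := by
    rw [Subgroup.coe_mul, hc, Pi.mul_apply, mul_comm]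
    congr 1
    exact congrArg (c t) (inv_smul_eq_iff.mpr s.2.symm)

theorem isMulCoboundary₁_of_apply_stabilizer_eq_one [IsPretransitive G X] {f : G → X → A}
    (hf : IsMulCocycle₁ f) (x : X) (h1 : ∀ s ∈ stabilizer G x, f s x = 1) :
    IsMulCoboundary₁ f := by
  choose γ hγ using exists_smul_eq G x
  -- `f g (g • x)` only depends on `g • x`, so `m y := (f g y)⁻¹` for any `g` with `g • x = y`.
  have hf_orbit (g : G) : f g (g • x) = f (γ (g • x)) (g • x) := by
    set k := γ (g • x)
    have hs : k⁻¹ * g ∈ stabilizer G x := by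
      rw [mem_stabilizer_iff, mul_smul, inv_smul_eq_iff, hγ]
    calc f g (g • x) = f (k * (k⁻¹ * g)) (g • x) := by rw [mul_inv_cancel_left]
      _ = f (k⁻¹ * g) ((k⁻¹ * g) • x) * f k (g • x) := by rw [hf, mul_smul]; rfl
      _ = f k (g • x) := by rw [show (k⁻¹ * g) • x = x from hs, h1 _ hs, one_mul]
  refine ⟨fun y => (f (γ y) y)⁻¹, fun g => funext fun y => ?_⟩
  set k := γ (g⁻¹ • y)
  have hk : (g * k) • x = y := by rw [mul_smul, hγ, smul_inv_smul]
  have hgk : f (γ y) y = f k (g⁻¹ • y) * f g y := by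
    rw [← hk, ← hf_orbit, hf]
    rfl
  change (f k (g⁻¹ • y))⁻¹ / (f (γ y) y)⁻¹ = f g y
  rw [hgk, inv_div_inv, mul_div_cancel_left]

theorem exists_cohomologous_const_of_restriction_surjective [IsPretransitive G X]
    {c : G → X → A} (hc : ∀ g h, c (g * h) = c g * mulAutArrow g (c h)) (x : X)
    (hres : ∀ ψ : stabilizer G x →* A, ∃ χ : G →* A, ∀ s : stabilizer G x, χ s = ψ s) :
    ∃ χ : G →* A, ∃ m : X → A, ∀ g, m * c g * mulAutArrow g m⁻¹ = fun _ => χ g := by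
  have hc' : IsMulCocycle₁ c := fun g h => (hc g h).trans (mul_comm _ _)
  obtain ⟨χ, hχ⟩ := hres (hc'.evalStabilizer x)
  obtain ⟨m, hm⟩ := isMulCoboundary₁_of_apply_stabilizer_eq_one
    (hc'.div (isMulCocycle₁_const χ)) x fun s hs => div_eq_one.mpr (hχ ⟨s, hs⟩).symm
  refine ⟨χ, m, fun g => ?_⟩
  have hmg : g • m * (fun _ => χ g) = c g * m := div_eq_div_iff_mul_eq_mul.mp (hm g)
  rw [map_inv, mul_inv_eq_iff_eq_mul, mul_comm m, ← hmg, mul_comm]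
  rfl

end Coinduced

end groupCohomology

/-- Let `G` act transitively on `X`, `A` an abelian group, `H = A^X ⋊ G`, and `x ∈ X` with
stabilizer `G_x`. If the restriction map `Hom(G, A) → Hom(G_x, A)` is surjective, then any
subgroup `C ⊆ H` with `π(C) = G` and `C ∩ A^X = 1` is conjugate in `H` to
`G^χ = {δ(χ g) · g : g ∈ G}` for some homomorphism `χ : G → A`. -/
theorem complement_conj_graph_of_restriction_surjective
    {G X A : Type*} [Group G] [MulAction G X] [MulAction.IsPretransitive G X]
    [CommGroup A] (x : X)
    (hres : ∀ ψ : (MulAction.stabilizer G x) →* A, ∃ χ : G →* A,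
      ∀ s : MulAction.stabilizer G x, χ s = ψ s)
    (C : Subgroup ((X → A) ⋊[mulAutArrow] G))
    (hsurj : Subgroup.map (SemidirectProduct.rightHom) C = ⊤)
    (htriv : ∀ z ∈ C, z.right = 1 → z = 1) :
    ∃ χ : G →* A, ∃ h : (X → A) ⋊[mulAutArrow] G,
      (fun k => h * k * h⁻¹) '' (C : Set ((X → A) ⋊[mulAutArrow] G)) =
        Set.range fun g : G => (⟨fun _ => χ g, g⟩ : (X → A) ⋊[mulAutArrow] G) := by
  obtain ⟨c, hC⟩ := SemidirectProduct.exists_coe_eq_range_mk_of_map_rightHom_eq_top hsurj htriv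
  obtain ⟨χ, m, hm⟩ := groupCohomology.exists_cohomologous_const_of_restriction_surjective
    (SemidirectProduct.map_mul_of_coe_eq_range_mk hC) x hres
  exact ⟨χ, SemidirectProduct.inl m, hC ▸ SemidirectProduct.image_conj_range_mk m hm⟩
end

section
/- For n > 2, the subgroup S_n^ε = {ε(σ)·σ : σ ∈ S_n} of the hyperoctahedral group H_n = {±1}^n ⋊ S_n is not conjugate in H_n to the natural subgroup S_n, where ε(σ) ∈ {±1}ⁿ here denotes the diagonal element (sgn(σ),…,sgn(σ)). -/
/-!
An element `(f, σ)` of `{±1}^n ⋊ S_n` carries a sign `f i` at each fixed point `i` of `σ`, and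
conjugating by `(a, π)` moves that sign, unchanged, to the fixed point `π i`. Elements of `S_n`
carry only the sign `+1`, whereas for `n > 2` the image of a transposition in `S_n^ε` has the
sign `-1` at any point it does not move.
-/

/-- The hyperoctahedral group `H_n = {±1}^n ⋊ S_n`, with `S_n` permuting coordinates. -/
abbrev Hyperoctahedral (n : ℕ) :=
  (Fin n → ℤˣ) ⋊[(mulAutArrow : Equiv.Perm (Fin n) →* MulAut (Fin n → ℤˣ))] Equiv.Perm (Fin n)

namespace SemidirectProduct

variable {α G : Type*} [Group G]

theorem mulAutArrow_perm_apply (π : Equiv.Perm α) (f : α → G) (i : α) :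
    mulAutArrow π f i = f (π⁻¹ i) :=
  rfl

theorem conj_left_apply_of_right_apply_eq
    (h k : (α → G) ⋊[(mulAutArrow : Equiv.Perm α →* MulAut (α → G))] Equiv.Perm α)
    {i : α} (hi : k.right i = i) :
    (h * k * h⁻¹).left (h.right i) = h.left (h.right i) * k.left i * (h.left (h.right i))⁻¹ := by
  have hi' : k.right.symm i = i := k.right.symm_apply_eq.mpr hi.symm
  simp only [mul_left, inv_left, mul_right, Pi.mul_apply, Pi.inv_apply, mulAutArrow_perm_apply,
    mul_inv_rev, Equiv.Perm.mul_apply, Equiv.Perm.coe_inv, Equiv.symm_apply_apply, inv_inv, hi']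

end SemidirectProduct

open SemidirectProduct in
/-- For `n > 2`, the subgroup `S_n^ε = {δ(sgn σ)·σ : σ ∈ S_n}` of `H_n` is not conjugate in
`H_n` to the natural subgroup `S_n`. -/
theorem snEps_not_conj_sn {n : ℕ} (hn : 2 < n) :
    ¬ ∃ h : Hyperoctahedral n,
      (fun k => h * k * h⁻¹) ''
          (Set.range fun σ : Equiv.Perm (Fin n) =>
            (⟨fun _ => Equiv.Perm.sign σ, σ⟩ : Hyperoctahedral n)) =
        Set.range (SemidirectProduct.inr : Equiv.Perm (Fin n) →* Hyperoctahedral n) := by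
  rintro ⟨h, heq⟩
  let τ : Equiv.Perm (Fin n) := Equiv.swap ⟨0, by omega⟩ ⟨1, by omega⟩
  have hτ_sign : Equiv.Perm.sign τ = -1 := Equiv.Perm.sign_swap (by simp [Fin.ext_iff])
  have hτ_fix : τ ⟨2, hn⟩ = ⟨2, hn⟩ := Equiv.swap_apply_of_ne_of_ne (by simp) (by simp)
  have hmem :
      h * ⟨fun _ => Equiv.Perm.sign τ, τ⟩ * h⁻¹ ∈ Set.range (inr : _ →* Hyperoctahedral n) :=
    heq ▸ Set.mem_image_of_mem _ ⟨τ, rfl⟩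
  obtain ⟨σ, hσ⟩ := hmem
  have hsign := congrFun (congrArg left hσ) (h.right ⟨2, hn⟩)
  rw [left_inr, Pi.one_apply, conj_left_apply_of_right_apply_eq h _ hτ_fix,
    mul_inv_cancel_comm] at hsign
  exact absurd (hsign.trans hτ_sign) (show (1 : ℤˣ) ≠ -1 by decide)
end

section
/- Let R be an ADE root system in a Euclidean space V (all roots of squared length 2) and Q(R) the lattice it generates. Then every vector v ∈ Q(R) with v·v = 2 belongs to R; that is, R(Q(R)) = R. -/
/-!
Write `v = α₁ + ⋯ + αₙ` with roots `αᵢ` (possible since `-α = s_α(α)` is a root). From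
`2 = v·v = ∑ αᵢ·v` some `α = αᵢ` has `α·v` a positive integer, and `w = v - α`, the sum of the
other roots, has `w·w = 4 - 2 α·v ≥ 0`. Either `α·v = 2`, so `w = 0` and `v = α`; or `α·v = 1`,
so `w·w = 2`, `w` is a root by induction on `n`, and `v = w + α = s_α(w)` because `α·w = -1`.
-/

open RealInnerProductSpace

theorem exists_multiset_sum_eq_of_mem_span_int {M : Type*} [AddCommGroup M] {R : Set M}
    (hneg : ∀ α ∈ R, -α ∈ R) {v : M} (hv : v ∈ Submodule.span ℤ R) :
    ∃ s : Multiset M, (∀ x ∈ s, x ∈ R) ∧ s.sum = v := by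
  rw [← Submodule.mem_toAddSubgroup, Submodule.span_int_eq_addSubgroupClosure,
    ← AddSubgroup.mem_toAddSubmonoid, AddSubgroup.closure_toAddSubmonoid] at hv
  obtain ⟨s, hs, rfl⟩ := AddSubmonoid.exists_multiset_of_mem_closure hv
  refine ⟨s, fun x hx => ?_, rfl⟩
  rcases hs x hx with h | h
  · exact h
  · simpa using hneg _ h

section InnerProductSpace

variable {V : Type*} [NormedAddCommGroup V] [InnerProductSpace ℝ V]

theorem inner_multiset_sum (v : V) (s : Multiset V) :
    ⟪v, s.sum⟫ = (s.map (⟪v, ·⟫)).sum :=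
  map_multiset_sum (innerₛₗ ℝ v) s

theorem Multiset.exists_mem_inner_sum_pos {s : Multiset V} (hs : s.sum ≠ 0) :
    ∃ x ∈ s, 0 < ⟪x, s.sum⟫ := by
  by_contra! h
  have hnonpos : ⟪s.sum, s.sum⟫ ≤ 0 := by
    rw [inner_multiset_sum]
    simpa using Multiset.sum_map_le_sum_map _ (fun _ => (0 : ℝ))
      fun x hx => (real_inner_comm x s.sum).trans_le (h x hx)
  exact hs (real_inner_self_nonpos.mp hnonpos)

theorem exists_int_inner_multiset_sum {R : Set V} {α : V}
    (hα : ∀ β ∈ R, ∃ m : ℤ, ⟪α, β⟫ = m) {s : Multiset V} (hs : ∀ x ∈ s, x ∈ R) :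
    ∃ m : ℤ, ⟪α, s.sum⟫ = m := by
  induction s using Multiset.induction_on with
  | empty => exact ⟨0, by simp⟩
  | cons x s ih =>
    obtain ⟨a, ha⟩ := hα x (hs x (Multiset.mem_cons_self x s))
    obtain ⟨b, hb⟩ := ih fun y hy => hs y (Multiset.mem_cons_of_mem hy)
    exact ⟨a + b, by rw [Multiset.sum_cons, inner_add_right, ha, hb, Int.cast_add]⟩

theorem neg_mem_of_reflection_mem {R : Set V} {α : V} (hlen : ⟪α, α⟫ = 2)
    (hrefl : α - ⟪α, α⟫ • α ∈ R) : -α ∈ R := by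
  rwa [hlen, two_smul, sub_add_cancel_left] at hrefl

theorem eq_zero_or_inner_eq_of_inner_add_self_eq_two {α w : V} {m : ℤ} (hα : ⟪α, α⟫ = 2)
    (hsum : ⟪α + w, α + w⟫ = 2) (hm : ⟪α, α + w⟫ = m) (hm_pos : 0 < m) :
    w = 0 ∨ ⟪w, w⟫ = 2 ∧ ⟪α, w⟫ = -1 := by
  have hαw : ⟪α, w⟫ = m - 2 := by rw [inner_add_right, hα] at hm; linarith
  have hww : ⟪w, w⟫ = 4 - 2 * m := by
    rw [real_inner_add_add_self, hα, hαw] at hsum; linarith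
  have hm_le : m ≤ 2 := by
    have : (m : ℝ) ≤ 2 := by linarith [real_inner_self_nonneg (x := w)]
    exact_mod_cast this
  obtain rfl | rfl : m = 1 ∨ m = 2 := by omega
  · exact Or.inr ⟨by rw [hww]; norm_num, by rw [hαw]; norm_num⟩
  · exact Or.inl (inner_self_eq_zero.mp (by rw [hww]; norm_num))

theorem multiset_sum_mem_of_inner_self_eq_two {R : Set V}
    (hlen : ∀ α ∈ R, ⟪α, α⟫ = 2)
    (hintegral : ∀ α ∈ R, ∀ β ∈ R, ∃ m : ℤ, ⟪α, β⟫ = m)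
    (hrefl : ∀ α ∈ R, ∀ β ∈ R, β - ⟪α, β⟫ • α ∈ R)
    (s : Multiset V) (hs : ∀ x ∈ s, x ∈ R) (hsum : ⟪s.sum, s.sum⟫ = 2) : s.sum ∈ R := by
  induction s using Multiset.strongInductionOn with
  | ih s ih =>
  have hne : s.sum ≠ 0 := fun h => by simp [h] at hsum
  obtain ⟨α, hαs, hpos⟩ := Multiset.exists_mem_inner_sum_pos hne
  have hα := hs α hαs
  obtain ⟨m, hm⟩ := exists_int_inner_multiset_sum (hintegral α hα) hs
  have hm_pos : 0 < m := Int.cast_pos.mp (hm ▸ hpos)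
  obtain ⟨t, rfl⟩ := Multiset.exists_cons_of_mem hαs
  rw [Multiset.sum_cons] at hsum hm ⊢
  rcases eq_zero_or_inner_eq_of_inner_add_self_eq_two (hlen α hα) hsum hm hm_pos with
    ht | ⟨htt, hαt⟩
  · rwa [ht, add_zero]
  · have ht : t.sum ∈ R := ih t (Multiset.lt_cons_self t α)
      (fun x hx => hs x (Multiset.mem_cons_of_mem hx)) htt
    have hreflect := hrefl α hα t.sum ht
    rwa [hαt, neg_one_smul, sub_neg_eq_add, add_comm] at hreflect

end InnerProductSpace

theorem root_of_mem_rootLattice_general {V : Type*}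
    [NormedAddCommGroup V] [InnerProductSpace ℝ V]
    (R : Finset V)
    (hlen : ∀ α ∈ R, (inner ℝ α α : ℝ) = 2)
    (hintegral : ∀ α ∈ R, ∀ β ∈ R, ∃ m : ℤ, (inner ℝ α β : ℝ) = m)
    (hrefl : ∀ α ∈ R, ∀ β ∈ R, β - (inner ℝ α β : ℝ) • α ∈ R)
    (v : V) (hv : v ∈ Submodule.span ℤ (R : Set V)) (hvlen : (inner ℝ v v : ℝ) = 2) :
    v ∈ R := by
  have hneg : ∀ α ∈ (R : Set V), -α ∈ (R : Set V) := fun α hα =>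
    neg_mem_of_reflection_mem (hlen α hα) (hrefl α hα α hα)
  obtain ⟨s, hs, rfl⟩ := exists_multiset_sum_eq_of_mem_span_int hneg hv
  exact multiset_sum_mem_of_inner_self_eq_two hlen hintegral hrefl s hs hvlen

/-- Let `R` be an ADE root system in a Euclidean space `V`: a finite set of vectors of squared
length `2`, spanning `V`, with integral pairwise inner products, and stable under the
reflections `s_α(β) = β - (α·β)α` for `α ∈ R`. Then every vector `v` of the root lattice
`Q(R) = span_ℤ R` with `v·v = 2` belongs to `R`; that is, `R(Q(R)) = R`. -/
theorem root_of_mem_rootLattice {V : Type*}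
    [NormedAddCommGroup V] [InnerProductSpace ℝ V] [FiniteDimensional ℝ V]
    (R : Finset V)
    (hlen : ∀ α ∈ R, (inner ℝ α α : ℝ) = 2)
    (hspan : Submodule.span ℝ (R : Set V) = ⊤)
    (hintegral : ∀ α ∈ R, ∀ β ∈ R, ∃ m : ℤ, (inner ℝ α β : ℝ) = m)
    (hrefl : ∀ α ∈ R, ∀ β ∈ R, β - (inner ℝ α β : ℝ) • α ∈ R)
    (v : V) (hv : v ∈ Submodule.span ℤ (R : Set V)) (hvlen : (inner ℝ v v : ℝ) = 2) :
    v ∈ R :=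
  root_of_mem_rootLattice_general R hlen hintegral hrefl v hv hvlen
end

section
/- Suppose ∏_i (t^i − 1)^{a_i} (t^i + 1)^{b_i} = ∏_i (t^i − 1)^{a'_i} (t^i + 1)^{b'_i} in Q(t), where a_i, b_i, a'_i, b'_i are nonnegative integers, only finitely many nonzero, and a_i + b_i = a'_i + b'_i for each i. Then a_i = a'_i and b_i = b'_i for every i. -/
open Polynomial

lemma ind_split (m i : ℕ) : (if m ∣ 2*i ∧ ¬ m ∣ i then (1:ℤ) else 0)
    = (if m ∣ 2*i then 1 else 0) - (if m ∣ i then 1 else 0) := by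
  classical
  by_cases h1 : m ∣ i
  · have h2 : m ∣ 2*i := h1.mul_left 2
    simp [h1, h2]
  · by_cases h2 : m ∣ 2*i <;> simp [h1, h2]

lemma rm_pow {R : Type*} [CommRing R] [IsDomain R] (x : R) {p : R[X]} (hp : p ≠ 0) (n : ℕ) :
    rootMultiplicity x (p ^ n) = n * rootMultiplicity x p := by
  induction n with
  | zero => rw [pow_zero, ← C_1, rootMultiplicity_C]; simp
  | succ n ih =>
    rw [pow_succ, rootMultiplicity_mul (mul_ne_zero (pow_ne_zero _ hp) hp), ih]
    ring

lemma rm_prod {R : Type*} [CommRing R] [IsDomain R] (x : R) (s : Finset ℕ) (f : ℕ → R[X])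
    (hf : ∀ i ∈ s, f i ≠ 0) :
    rootMultiplicity x (∏ i ∈ s, f i) = ∑ i ∈ s, rootMultiplicity x (f i) := by
  classical
  induction s using Finset.cons_induction with
  | empty => rw [Finset.prod_empty, Finset.sum_empty, ← C_1, rootMultiplicity_C]
  | cons i s hi ih =>
    rw [Finset.prod_cons, Finset.sum_cons,
      rootMultiplicity_mul (mul_ne_zero (hf i (Finset.mem_cons_self i s))
        (Finset.prod_ne_zero_iff.2 fun j hj => hf j (Finset.mem_cons_of_mem hj))),
      ih (fun j hj => hf j (Finset.mem_cons_of_mem hj))]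

lemma rm_X_pow_sub_C {i : ℕ} (hi : i ≠ 0) (c ζ : ℂ) (hc : c ≠ 0) :
    rootMultiplicity ζ ((X : ℂ[X]) ^ i - C c) = if ζ ^ i = c then 1 else 0 := by
  have hne : ((X : ℂ[X]) ^ i - C c) ≠ 0 := X_pow_sub_C_ne_zero (Nat.pos_of_ne_zero hi) c
  have hsep : ((X : ℂ[X]) ^ i - C c).Separable :=
    separable_X_pow_sub_C c (by exact_mod_cast hi) hc
  split_ifs with h
  · have h1 : ((X : ℂ[X]) ^ i - C c).IsRoot ζ := by simp [IsRoot, h]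
    have h2 := rootMultiplicity_le_one_of_separable hsep ζ
    have h3 := (rootMultiplicity_pos hne).2 h1
    omega
  · exact rootMultiplicity_eq_zero (by simp [IsRoot, sub_eq_zero, h])

lemma pow_eq_neg_one_iff' {m i : ℕ} {ζ : ℂ} (h : IsPrimitiveRoot ζ m) :
    ζ ^ i = -1 ↔ (m ∣ 2 * i ∧ ¬ m ∣ i) := by
  constructor
  · intro hz
    refine ⟨(h.pow_eq_one_iff_dvd _).mp ?_, fun hd => ?_⟩
    · rw [mul_comm, pow_mul, hz]; norm_num
    · rw [(h.pow_eq_one_iff_dvd _).mpr hd] at hz; norm_num at hz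
  · rintro ⟨h2, h1⟩
    have hsq : (ζ ^ i) ^ 2 = 1 := by
      rw [← pow_mul, mul_comm]; exact (h.pow_eq_one_iff_dvd _).mpr h2
    rcases sq_eq_one_iff.mp hsq with h' | h'
    · exact absurd ((h.pow_eq_one_iff_dvd _).mp h') h1
    · exact h'

/-- Suppose `∏ᵢ (tⁱ − 1)^{aᵢ} (tⁱ + 1)^{bᵢ} = ∏ᵢ (tⁱ − 1)^{a'ᵢ} (tⁱ + 1)^{b'ᵢ}` in `ℚ(t)`,
where the exponents are nonnegative integers, finitely many nonzero, indexed by positive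
integers `i`, and `aᵢ + bᵢ = a'ᵢ + b'ᵢ` for each `i`. Then `aᵢ = a'ᵢ` and `bᵢ = b'ᵢ` for
every `i`. -/
theorem signed_cycle_poly_unique (a b a' b' : ℕ →₀ ℕ)
    (ha0 : a 0 = 0) (hb0 : b 0 = 0) (ha'0 : a' 0 = 0) (hb'0 : b' 0 = 0)
    (hsum : ∀ i : ℕ, a i + b i = a' i + b' i)
    (heq : ∏ᶠ i : ℕ, ((RatFunc.X : RatFunc ℚ) ^ i - 1) ^ (a i) * ((RatFunc.X : RatFunc ℚ) ^ i + 1) ^ (b i) =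
      ∏ᶠ i : ℕ, ((RatFunc.X : RatFunc ℚ) ^ i - 1) ^ (a' i) * ((RatFunc.X : RatFunc ℚ) ^ i + 1) ^ (b' i)) :
    a = a' ∧ b = b' := by
  classical
  set S : Finset ℕ := ((a.support ∪ b.support) ∪ (a'.support ∪ b'.support)) with hSdef
  have hA : a.support ⊆ S := by intro x hx; simp only [hSdef, Finset.mem_union]; tauto
  have hB : b.support ⊆ S := by intro x hx; simp only [hSdef, Finset.mem_union]; tauto
  have hA' : a'.support ⊆ S := by intro x hx; simp only [hSdef, Finset.mem_union]; tauto
  have hB' : b'.support ⊆ S := by intro x hx; simp only [hSdef, Finset.mem_union]; tauto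
  have h0S : (0 : ℕ) ∉ S := by
    simp [hSdef, Finsupp.mem_support_iff, ha0, hb0, ha'0, hb'0]
  -- Step 1: turn the finprods into finite products and pull back to ℚ[X]
  have hfin : ∀ (c d : ℕ →₀ ℕ), c.support ⊆ S → d.support ⊆ S →
      (∏ᶠ i : ℕ, ((RatFunc.X : RatFunc ℚ) ^ i - 1) ^ (c i) * ((RatFunc.X : RatFunc ℚ) ^ i + 1) ^ (d i))
        = algebraMap ℚ[X] (RatFunc ℚ)
            (∏ i ∈ S, ((Polynomial.X : ℚ[X]) ^ i - 1) ^ (c i) * ((Polynomial.X : ℚ[X]) ^ i + 1) ^ (d i)) := by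
    intro c d hc hd
    rw [finprod_eq_prod_of_mulSupport_subset _ (s := S) ?_, map_prod]
    · refine Finset.prod_congr rfl fun i _ => ?_
      simp only [map_mul, map_pow, map_sub, map_add, map_one, RatFunc.algebraMap_X]
    · intro i hi
      by_contra hiS
      have hci : c i = 0 := by
        by_contra h; exact hiS (hc (Finsupp.mem_support_iff.2 h))
      have hdi : d i = 0 := by
        by_contra h; exact hiS (hd (Finsupp.mem_support_iff.2 h))
      simp only [Function.mem_mulSupport] at hi
      apply hi
      rw [hci, hdi]; simp
  have hpoly : (∏ i ∈ S, ((Polynomial.X : ℚ[X]) ^ i - 1) ^ (a i) * ((Polynomial.X : ℚ[X]) ^ i + 1) ^ (b i))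
      = ∏ i ∈ S, ((Polynomial.X : ℚ[X]) ^ i - 1) ^ (a' i) * ((Polynomial.X : ℚ[X]) ^ i + 1) ^ (b' i) := by
    apply IsFractionRing.injective ℚ[X] (RatFunc ℚ)
    rw [← hfin a b hA hB, ← hfin a' b' hA' hB']
    exact heq
  -- Step 2: move to ℂ[X]
  have hC : (∏ i ∈ S, ((X : ℂ[X]) ^ i - 1) ^ (a i) * ((X : ℂ[X]) ^ i + 1) ^ (b i))
      = ∏ i ∈ S, ((X : ℂ[X]) ^ i - 1) ^ (a' i) * ((X : ℂ[X]) ^ i + 1) ^ (b' i) := by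
    have := congrArg (Polynomial.map (algebraMap ℚ ℂ)) hpoly
    simpa only [Polynomial.map_prod, Polynomial.map_mul, Polynomial.map_pow, Polynomial.map_sub,
      Polynomial.map_add, Polynomial.map_one, Polynomial.map_X] using this
  -- Step 3: count multiplicities at primitive roots of unity
  have hcount : ∀ m : ℕ, m ≠ 0 →
      (∑ i ∈ S, ((a i) * (if m ∣ i then 1 else 0) + (b i) * (if m ∣ 2*i ∧ ¬ m ∣ i then 1 else 0)))
      = ∑ i ∈ S, ((a' i) * (if m ∣ i then 1 else 0) + (b' i) * (if m ∣ 2*i ∧ ¬ m ∣ i then 1 else 0)) := by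
    intro m hm
    set ζ : ℂ := Complex.exp (2 * Real.pi * Complex.I / m) with hζdef
    have hζ : IsPrimitiveRoot ζ m := Complex.isPrimitiveRoot_exp m hm
    have hne1 : ∀ i ∈ S, ((X : ℂ[X]) ^ i - 1) ≠ 0 := by
      intro i hiS
      have hi0 : i ≠ 0 := fun h => h0S (h ▸ hiS)
      simpa using X_pow_sub_C_ne_zero (Nat.pos_of_ne_zero hi0) (1 : ℂ)
    have hne2 : ∀ i ∈ S, ((X : ℂ[X]) ^ i + 1) ≠ 0 := by
      intro i hiS
      have hi0 : i ≠ 0 := fun h => h0S (h ▸ hiS)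
      have := X_pow_sub_C_ne_zero (Nat.pos_of_ne_zero hi0) (-1 : ℂ)
      simpa [sub_neg_eq_add] using this
    have key : ∀ (c d : ℕ →₀ ℕ),
        rootMultiplicity ζ (∏ i ∈ S, ((X : ℂ[X]) ^ i - 1) ^ (c i) * ((X : ℂ[X]) ^ i + 1) ^ (d i))
        = ∑ i ∈ S, ((c i) * (if m ∣ i then 1 else 0) + (d i) * (if m ∣ 2*i ∧ ¬ m ∣ i then 1 else 0)) := by
      intro c d
      rw [rm_prod ζ S _ (fun i hiS =>
        mul_ne_zero (pow_ne_zero _ (hne1 i hiS)) (pow_ne_zero _ (hne2 i hiS)))]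
      refine Finset.sum_congr rfl fun i hiS => ?_
      have hi0 : i ≠ 0 := fun h => h0S (h ▸ hiS)
      rw [rootMultiplicity_mul (mul_ne_zero (pow_ne_zero _ (hne1 i hiS))
        (pow_ne_zero _ (hne2 i hiS))), rm_pow ζ (hne1 i hiS), rm_pow ζ (hne2 i hiS)]
      congr 1
      · congr 1
        rw [show ((X : ℂ[X]) ^ i - 1) = X ^ i - C 1 by rw [map_one],
          rm_X_pow_sub_C hi0 1 ζ one_ne_zero]
        simp only [hζ.pow_eq_one_iff_dvd]
      · congr 1
        rw [show ((X : ℂ[X]) ^ i + 1) = X ^ i - C (-1) by simp,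
          rm_X_pow_sub_C hi0 (-1) ζ (by norm_num)]
        simp only [pow_eq_neg_one_iff' hζ]
    rw [← key a b, ← key a' b', hC]
  -- Step 4: integer bookkeeping
  have hde : ∀ i : ℕ, ((b i : ℤ) - b' i) = -(((a i : ℤ) - a' i)) := by
    intro i; have := hsum i; omega
  have hkey : ∀ m : ℕ, m ≠ 0 →
      ∑ i ∈ S, (((a i : ℤ) - a' i) * (if m ∣ i then 1 else 0)
        - ((a i : ℤ) - a' i) * (if m ∣ 2*i ∧ ¬ m ∣ i then 1 else 0)) = 0 := by
    intro m hm
    have h := congrArg (Nat.cast : ℕ → ℤ) (hcount m hm)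
    push_cast at h
    have h0 : ∑ i ∈ S,
        ((((a i : ℤ) * if m ∣ i then 1 else 0) + (b i : ℤ) * if m ∣ 2 * i ∧ ¬m ∣ i then 1 else 0) -
          (((a' i : ℤ) * if m ∣ i then 1 else 0) + (b' i : ℤ) * if m ∣ 2 * i ∧ ¬m ∣ i then 1 else 0))
        = 0 := by
      rw [Finset.sum_sub_distrib]
      exact sub_eq_zero.2 h
    refine Eq.trans (Finset.sum_congr rfl fun i _ => ?_) h0
    have hb := hde i
    linear_combination (-(if m ∣ 2*i ∧ ¬ m ∣ i then (1:ℤ) else 0)) * hb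
  have hkey2 : ∀ m : ℕ, m ≠ 0 →
      2 * (∑ i ∈ S, ((a i : ℤ) - a' i) * (if m ∣ i then 1 else 0))
        = ∑ i ∈ S, ((a i : ℤ) - a' i) * (if m ∣ 2*i then 1 else 0) := by
    intro m hm
    have hsplit : ∀ i : ℕ, (if m ∣ 2*i ∧ ¬ m ∣ i then (1:ℤ) else 0)
        = (if m ∣ 2*i then 1 else 0) - (if m ∣ i then 1 else 0) := ind_split m
    have h2 : ∑ i ∈ S, (2 * (((a i : ℤ) - a' i) * (if m ∣ i then 1 else 0))
        - ((a i : ℤ) - a' i) * (if m ∣ 2*i then 1 else 0)) = 0 :=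
      (Finset.sum_congr rfl fun i _ => by rw [hsplit i]; ring).trans (hkey m hm)
    rw [Finset.mul_sum, ← sub_eq_zero, ← Finset.sum_sub_distrib]
    exact h2
  have hDodd : ∀ m : ℕ, Odd m →
      (∑ i ∈ S, ((a i : ℤ) - a' i) * (if m ∣ i then 1 else 0)) = 0 := by
    intro m hmo
    have hm : m ≠ 0 := by rcases hmo with ⟨k, hk⟩; omega
    have hco : Nat.Coprime m 2 := Nat.coprime_two_right.mpr hmo
    have hiff : ∀ i : ℕ, m ∣ 2 * i ↔ m ∣ i := fun i =>
      ⟨fun h => hco.dvd_of_dvd_mul_left h, fun h => h.mul_left 2⟩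
    have h2 := hkey2 m hm
    simp only [hiff] at h2
    linarith
  have h2eq : ∀ u : ℕ, u ≠ 0 →
      2 * (∑ i ∈ S, ((a i : ℤ) - a' i) * (if 2*u ∣ i then 1 else 0))
        = ∑ i ∈ S, ((a i : ℤ) - a' i) * (if u ∣ i then 1 else 0) := by
    intro u hu
    have h2 := hkey2 (2*u) (by omega)
    simpa only [mul_dvd_mul_iff_left (two_ne_zero (α := ℕ))] using h2
  have hD0 : ∀ m : ℕ, m ≠ 0 →
      (∑ i ∈ S, ((a i : ℤ) - a' i) * (if m ∣ i then 1 else 0)) = 0 := by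
    intro m
    induction m using Nat.strong_induction_on with
    | _ m ih =>
      intro hm
      rcases Nat.even_or_odd m with he | ho
      · obtain ⟨u, hu⟩ := he
        have hu0 : u ≠ 0 := by omega
        have h2 := h2eq u hu0
        have h3 := ih u (by omega) hu0
        rw [hu, show u + u = 2 * u from by ring]
        linarith
      · exact hDodd m ho
  -- Step 5: downward induction to pointwise equality
  set N := S.sup id with hN
  have hSle : ∀ i ∈ S, i ≤ N := fun i hi => Finset.le_sup (f := id) hi
  have hout : ∀ n : ℕ, n ∉ S → (a n : ℤ) - a' n = 0 := by
    intro n hn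
    have h1 : a n = 0 := Finsupp.notMem_support_iff.1 fun h => hn (hA h)
    have h2 : a' n = 0 := Finsupp.notMem_support_iff.1 fun h => hn (hA' h)
    simp [h1, h2]
  have hdzero : ∀ k n : ℕ, n ≠ 0 → N < n + k → (a n : ℤ) - a' n = 0 := by
    intro k
    induction k with
    | zero =>
      intro n hn hlt
      exact hout n fun h => absurd (hSle n h) (by omega)
    | succ k ih =>
      intro n hn hlt
      by_cases hnS : n ∈ S
      · have hD := hD0 n hn
        have hrw : ∑ i ∈ S, ((a i : ℤ) - a' i) * (if n ∣ i then 1 else 0)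
            = ∑ i ∈ S, (if i = n then ((a n : ℤ) - a' n) else 0) := by
          refine Finset.sum_congr rfl fun i hiS => ?_
          by_cases hin : i = n
          · subst hin; simp
          · rw [if_neg hin]
            by_cases hdvd : n ∣ i
            · have hi0 : i ≠ 0 := fun h => h0S (h ▸ hiS)
              have hge : n + 1 ≤ i := by
                obtain ⟨t, rfl⟩ := hdvd
                have ht0 : t ≠ 0 := by rintro rfl; simp at hi0
                have ht1 : t ≠ 1 := by rintro rfl; simp at hin
                have ht2 : 2 ≤ t := by omega
                calc n + 1 ≤ n + n := by omega
                  _ = n * 2 := by ring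
                  _ ≤ n * t := Nat.mul_le_mul_left n ht2
              have := ih i hi0 (by omega)
              simp [this]
            · simp [hdvd]
        rw [hrw, Finset.sum_ite_eq' S n (fun _ => ((a n : ℤ) - a' n)), if_pos hnS] at hD
        exact hD
      · exact hout n hnS
  have hfinal : ∀ n : ℕ, a n = a' n := by
    intro n
    rcases eq_or_ne n 0 with rfl | hn
    · rw [ha0, ha'0]
    · have := hdzero (N + 1) n hn (by omega)
      omega
  constructor
  · ext n; exact hfinal n
  · ext n; have h1 := hsum n; have h2 := hfinal n; omega
end
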